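/- arXiv:2208.14829 — 2 statements merged into one kernel-verified Lean document; each statement's English description precedes it below -/
import Mathlib

section
/- Fix v₀ ≤ 0 and the prior μ, and let u₀ < u₀' < 0 with (1 − v₀)² + u₀ > (E_μ[θ] − v₀)² (so the valuable condition also holds for u₀'). Write η(θ) = √((θ − v₀)² + u₀) + v₀ and η'(θ) = √((θ − v₀)² + u₀') + v₀; let (ā, θ̄) and (ā', θ̄') be the corresponding threshold pairs, where ā is the unique solution of ∫_{θ̄}¹ (η(θ) − ā) dμ(θ) + ā − E_μ[θ] = 0 with η(θ̄) = ā, and similarly for (ā', θ̄') with η'; and let p̃*(θ) = 0 for θ < θ̄ and p̃*(θ) = (η(θ) − ā)/(η(θ) − v₀) for θ ≥ θ̄, and analogously p̃*' from (η', ā', θ̄'). Then: (a) η(θ) < η'(θ) for every θ at which both are defined; (b) ā' < ā and θ̄' < θ̄; (c) p̃*'(θ) ≥ p̃*(θ) for every θ ∈ [0,1]. -/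
/-!
On `[0,1]` the first-order condition for `(ā, θ̄)` reads `∫ max (η θ) ā dμ = E_μ[θ]`. Its left side
is nondecreasing in `ā` and, because `η ≥ ā` beyond `θ̄` and the valuable condition forces
`θ̄ < 1`, strictly increasing when `η` is raised on `(θ̄, 1]`. Raising `u₀` raises `η` pointwise,
so the pooling action falls, `ā' < ā`; then `η'(θ̄') = ā' < ā = η(θ̄) ≤ η'(θ̄)` and monotonicity of
`η'` give `θ̄' < θ̄`. Finally `(η - ā) / (η - v₀)` increases in `η` and decreases in `ā`.
-/

open MeasureTheory Set

noncomputable def separatingAction (v u θ : ℝ) : ℝ := √((θ - v) ^ 2 + u) + v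

section separatingAction

variable {v u u' θ : ℝ}

lemma le_separatingAction : v ≤ separatingAction v u θ :=
  le_add_of_nonneg_left (Real.sqrt_nonneg _)

lemma separatingAction_monotoneOn (v u : ℝ) : MonotoneOn (separatingAction v u) (Ici v) := by
  intro x hx y _ hxy
  have hx : 0 ≤ x - v := sub_nonneg.2 hx
  unfold separatingAction
  gcongr

lemma separatingAction_le_of_le (h : u ≤ u') : separatingAction v u θ ≤ separatingAction v u' θ := by
  unfold separatingAction
  gcongr

lemma separatingAction_lt_of_lt (h0 : 0 ≤ (θ - v) ^ 2 + u) (h : u < u') :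
    separatingAction v u θ < separatingAction v u' θ :=
  add_lt_add_left (Real.sqrt_lt_sqrt h0 (by linarith)) v

lemma lt_separatingAction_of_sq_lt {x : ℝ} (h : (x - v) ^ 2 < (θ - v) ^ 2 + u) :
    x < separatingAction v u θ := by
  have := (le_abs_self (x - v)).trans_lt
    (Real.sqrt_sq_eq_abs (x - v) ▸ Real.sqrt_lt_sqrt (sq_nonneg _) h)
  unfold separatingAction
  linarith

lemma sq_sub_add_nonneg_of_sqrt_neg_add_le (h : √(-u) + v ≤ θ) : 0 ≤ (θ - v) ^ 2 + u := by
  have := (Real.sqrt_le_iff.1 (le_sub_iff_add_le.2 h)).2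
  linarith

end separatingAction

lemma sub_div_sub_le_sub_div_sub {v a a' x x' : ℝ} (hva' : v ≤ a') (ha : a' ≤ a) (hax : a ≤ x)
    (hx : x ≤ x') : (x - a) / (x - v) ≤ (x' - a') / (x' - v) := by
  rcases (sub_nonneg.2 ((hva'.trans ha).trans hax)).eq_or_lt with h | h
  · rw [← h, div_zero]
    exact div_nonneg (by linarith) (by linarith)
  · rw [div_le_div_iff₀ h (by linarith)]
    nlinarith

lemma setIntegral_lt_setIntegral_of_le_of_lt_on {X : Type*} [MeasurableSpace X] {μ : Measure X}
    {f g : X → ℝ} {s t : Set X} (hs : MeasurableSet s) (hf : IntegrableOn f s μ)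
    (hg : IntegrableOn g s μ) (hle : ∀ x ∈ s, f x ≤ g x) (hts : t ⊆ s) (hlt : ∀ x ∈ t, f x < g x)
    (ht : 0 < μ t) : ∫ x in s, f x ∂μ < ∫ x in s, g x ∂μ := by
  rw [← sub_pos, ← integral_sub hg hf]
  refine (setIntegral_pos_iff_support_of_nonneg_ae ?_ (hg.sub hf)).2 ?_
  · exact (ae_restrict_mem hs).mono fun x hx => sub_nonneg.2 (hle x hx)
  · refine ht.trans_le (measure_mono fun x hx => ?_)
    exact mem_inter (sub_pos.2 (hlt x hx)).ne' (hts hx)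

/-- `(f t, t)` is the pair `(ā, θ̄)` of the paper when `f = η` and `r = 1`. -/
def IsPoolingThreshold (μ : Measure ℝ) (f : ℝ → ℝ) (E r t : ℝ) : Prop :=
  (∫ θ in Icc t r, (f θ - f t) ∂μ) + f t - E = 0

namespace IsPoolingThreshold

variable {μ : Measure ℝ} {f g : ℝ → ℝ} {E l r t t' : ℝ}

lemma le (h : IsPoolingThreshold μ f E r t) (hf : ∀ θ ∈ Icc t r, f t ≤ f θ) : f t ≤ E := by
  have := setIntegral_nonneg (μ := μ) measurableSet_Icc fun θ hθ => sub_nonneg.2 (hf θ hθ)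
  unfold IsPoolingThreshold at h
  linarith

lemma lt_right (h : IsPoolingThreshold μ f E r t) (hf : MonotoneOn f (Icc l r))
    (ht : t ∈ Icc l r) (hE : E < f r) : t < r :=
  hf.reflect_lt ht ⟨ht.1.trans ht.2, le_rfl⟩
    ((h.le fun _ hθ => hf ht ⟨ht.1.trans hθ.1, hθ.2⟩ hθ.1).trans_lt hE)

lemma setIntegral_max_eq [IsFiniteMeasure μ] (h : IsPoolingThreshold μ f E r t)
    (hμ : μ (Icc l r) = 1) (hf : MonotoneOn f (Icc l r)) (ht : t ∈ Icc l r) :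
    ∫ θ in Icc l r, max (f θ) (f t) ∂μ = E := by
  have hpt : ∀ θ ∈ Icc l r,
      max (f θ) (f t) = (Icc t r).indicator (fun θ => f θ - f t) θ + f t := by
    intro θ hθ
    by_cases hθt : t ≤ θ
    · rw [indicator_of_mem (show θ ∈ Icc t r from ⟨hθt, hθ.2⟩), max_eq_left (hf ht hθ hθt), sub_add_cancel]
    · rw [indicator_of_notMem (fun h : θ ∈ Icc t r => hθt h.1), max_eq_right (hf hθ ht (not_le.1 hθt).le),
        zero_add]
  have hint : IntegrableOn (fun θ => f θ - f t) (Icc l r) μ :=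
    (hf.integrableOn_isCompact isCompact_Icc).sub (integrableOn_const (measure_ne_top _ _))
  rw [setIntegral_congr_fun measurableSet_Icc hpt,
    integral_add (hint.indicator measurableSet_Icc) (integrableOn_const (measure_ne_top _ _)),
    setIntegral_indicator measurableSet_Icc, Icc_inter_Icc, max_eq_right ht.1, min_self,
    setIntegral_const, measureReal_def, hμ, ENNReal.toReal_one, one_smul]
  unfold IsPoolingThreshold at h
  linarith

lemma lt_and_lt [IsFiniteMeasure μ] (h : IsPoolingThreshold μ f E r t)
    (h' : IsPoolingThreshold μ g E r t') (hμ : μ (Icc l r) = 1) (hf : MonotoneOn f (Icc l r))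
    (hg : MonotoneOn g (Icc l r)) (hfg : ∀ θ ∈ Icc l r, f θ ≤ g θ)
    (hlt : ∀ θ ∈ Ioo t r, f θ < g θ) (hμt : 0 < μ (Ioo t r)) (ht : t ∈ Icc l r)
    (ht' : t' ∈ Icc l r) : g t' < f t ∧ t' < t := by
  have hint : ∀ {φ : ℝ → ℝ} (c : ℝ), MonotoneOn φ (Icc l r) →
      IntegrableOn (fun θ => max (φ θ) c) (Icc l r) μ :=
    fun c hφ => (hφ.max monotoneOn_const).integrableOn_isCompact isCompact_Icc
  have hIoo : Ioo t r ⊆ Icc l r := fun θ hθ => ⟨ht.1.trans hθ.1.le, hθ.2.le⟩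
  have hpool : g t' < f t := by
    by_contra! hle
    have hstrict : ∫ θ in Icc l r, max (f θ) (f t) ∂μ < ∫ θ in Icc l r, max (g θ) (f t) ∂μ :=
      setIntegral_lt_setIntegral_of_le_of_lt_on measurableSet_Icc (hint _ hf) (hint _ hg)
        (fun θ hθ => max_le_max_right _ (hfg θ hθ)) hIoo
        (fun θ hθ => (max_eq_left (hf ht (hIoo hθ) hθ.1.le)).trans_lt
          ((hlt θ hθ).trans_le (le_max_left _ _))) hμt
    have hmono : ∫ θ in Icc l r, max (g θ) (f t) ∂μ ≤ ∫ θ in Icc l r, max (g θ) (g t') ∂μ :=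
      setIntegral_mono_on (hint _ hg) (hint _ hg) measurableSet_Icc
        fun θ _ => max_le_max_left _ hle
    linarith [h.setIntegral_max_eq hμ hf ht, h'.setIntegral_max_eq hμ hg ht']
  exact ⟨hpool, hg.reflect_lt ht' ht (hpool.trans_le (hfg t ht))⟩

end IsPoolingThreshold

theorem comparative_statics_u₀_general
    (μ : Measure ℝ) [IsProbabilityMeasure μ]
    (hsupp : μ (Icc (0 : ℝ) 1) = 1)
    (hfull : ∀ a b : ℝ, 0 ≤ a → a < b → b ≤ 1 → 0 < μ (Ioo a b))
    (v₀ : ℝ) (hv₀ : v₀ ≤ 0)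
    (u₀ u₀' : ℝ) (huu : u₀ < u₀')
    (Eμ : ℝ)
    (hval : (Eμ - v₀) ^ 2 < (1 - v₀) ^ 2 + u₀)
    (η η' : ℝ → ℝ)
    (hη : ∀ θ, η θ = Real.sqrt ((θ - v₀) ^ 2 + u₀) + v₀)
    (hη' : ∀ θ, η' θ = Real.sqrt ((θ - v₀) ^ 2 + u₀') + v₀)
    (s s' : ℝ) (hs : s = max 0 (Real.sqrt (-u₀) + v₀)) (hs' : s' = max 0 (Real.sqrt (-u₀') + v₀))
    (abar θbar abar' θbar' : ℝ)
    (hθbar : θbar ∈ Icc s 1) (hηθbar : η θbar = abar)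
    (hFOC : (∫ θ in Icc θbar 1, (η θ - abar) ∂μ) + abar - Eμ = 0)
    (hθbar' : θbar' ∈ Icc s' 1) (hηθbar' : η' θbar' = abar')
    (hFOC' : (∫ θ in Icc θbar' 1, (η' θ - abar') ∂μ) + abar' - Eμ = 0)
    (pf pf' : ℝ → ℝ)
    (hpf : ∀ θ, pf θ = if θ < θbar then 0 else (η θ - abar) / (η θ - v₀))
    (hpf' : ∀ θ, pf' θ = if θ < θbar' then 0 else (η' θ - abar') / (η' θ - v₀)) :
    (∀ θ ∈ Icc (0 : ℝ) 1, 0 ≤ (θ - v₀) ^ 2 + u₀ → 0 ≤ (θ - v₀) ^ 2 + u₀' → η θ < η' θ) ∧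
      abar' < abar ∧ θbar' < θbar ∧
      ∀ θ ∈ Icc (0 : ℝ) 1, pf θ ≤ pf' θ := by
  obtain rfl : η = separatingAction v₀ u₀ := funext hη
  obtain rfl : η' = separatingAction v₀ u₀' := funext hη'
  subst hηθbar hηθbar' hs hs'
  have hθbar01 : θbar ∈ Icc 0 1 := ⟨(le_max_left _ _).trans hθbar.1, hθbar.2⟩
  have hθbar01' : θbar' ∈ Icc 0 1 := ⟨(le_max_left _ _).trans hθbar'.1, hθbar'.2⟩
  have hIcc : Icc 0 1 ⊆ Ici v₀ := fun θ hθ => hv₀.trans hθ.1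
  have hmono := (separatingAction_monotoneOn v₀ u₀).mono hIcc
  have hmono' := (separatingAction_monotoneOn v₀ u₀').mono hIcc
  have hθbar1 := IsPoolingThreshold.lt_right hFOC hmono hθbar01 (lt_separatingAction_of_sq_lt hval)
  obtain ⟨hpool, hthreshold⟩ := IsPoolingThreshold.lt_and_lt hFOC hFOC' hsupp hmono hmono'
    (fun _ _ => separatingAction_le_of_le huu.le)
    (fun θ hθ => separatingAction_lt_of_lt (sq_sub_add_nonneg_of_sqrt_neg_add_le
      ((le_max_right _ _).trans (hθbar.1.trans hθ.1.le))) huu)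
    (hfull _ _ hθbar01.1 hθbar1 le_rfl) hθbar01 hθbar01'
  refine ⟨fun θ _ h0 _ => separatingAction_lt_of_lt h0 huu, hpool, hthreshold, fun θ hθ => ?_⟩
  rw [hpf, hpf']
  by_cases h' : θ < θbar'
  · rw [if_pos h', if_pos (h'.trans hthreshold)]
  rw [if_neg h']
  by_cases h : θ < θbar
  · rw [if_pos h]
    exact div_nonneg (sub_nonneg.2 (hmono' hθbar01' hθ (not_lt.1 h')))
      (sub_nonneg.2 le_separatingAction)
  · rw [if_neg h]
    exact sub_div_sub_le_sub_div_sub le_separatingAction hpool.le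
      (hmono hθbar01 hθ (not_lt.1 h)) (separatingAction_le_of_le huu.le)

/-- **Comparative statics in the principal's status quo payoff `u₀`.** Fix `v₀ ≤ 0` and the
prior `μ`, and let `u₀ < u₀' < 0` with the valuable condition holding for `u₀`. Then (a) the
separating action increases pointwise: `η(θ) < η'(θ)` wherever both are defined; (b) both
the pooling action and the state threshold decrease: `ā' < ā` and `θ̄' < θ̄`; and (c) the
veto probability weakly increases: `p̃*'(θ) ≥ p̃*(θ)` for all `θ ∈ [0,1]`. -/
theorem comparative_statics_u₀
    (μ : Measure ℝ) [IsProbabilityMeasure μ]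
    (hsupp : μ (Icc (0 : ℝ) 1) = 1)
    (hfull : ∀ a b : ℝ, 0 ≤ a → a < b → b ≤ 1 → 0 < μ (Ioo a b))
    (v₀ : ℝ) (hv₀ : v₀ ≤ 0)
    (u₀ u₀' : ℝ) (huu : u₀ < u₀') (hu₀' : u₀' < 0)
    (Eμ : ℝ) (hEμ : Eμ = ∫ θ, θ ∂μ)
    (hval : (Eμ - v₀) ^ 2 < (1 - v₀) ^ 2 + u₀)
    (η η' : ℝ → ℝ)
    (hη : ∀ θ, η θ = Real.sqrt ((θ - v₀) ^ 2 + u₀) + v₀)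
    (hη' : ∀ θ, η' θ = Real.sqrt ((θ - v₀) ^ 2 + u₀') + v₀)
    (s s' : ℝ) (hs : s = max 0 (Real.sqrt (-u₀) + v₀)) (hs' : s' = max 0 (Real.sqrt (-u₀') + v₀))
    (abar θbar abar' θbar' : ℝ)
    (hθbar : θbar ∈ Icc s 1) (hηθbar : η θbar = abar)
    (hFOC : (∫ θ in Icc θbar 1, (η θ - abar) ∂μ) + abar - Eμ = 0)
    (hθbar' : θbar' ∈ Icc s' 1) (hηθbar' : η' θbar' = abar')
    (hFOC' : (∫ θ in Icc θbar' 1, (η' θ - abar') ∂μ) + abar' - Eμ = 0)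
    (pf pf' : ℝ → ℝ)
    (hpf : ∀ θ, pf θ = if θ < θbar then 0 else (η θ - abar) / (η θ - v₀))
    (hpf' : ∀ θ, pf' θ = if θ < θbar' then 0 else (η' θ - abar') / (η' θ - v₀)) :
    (∀ θ ∈ Icc (0 : ℝ) 1, 0 ≤ (θ - v₀) ^ 2 + u₀ → 0 ≤ (θ - v₀) ^ 2 + u₀' → η θ < η' θ) ∧
      abar' < abar ∧ θbar' < θbar ∧
      ∀ θ ∈ Icc (0 : ℝ) 1, pf θ ≤ pf' θ :=
  comparative_statics_u₀_general μ hsupp hfull v₀ hv₀ u₀ u₀' huu Eμ hval η η' hη hη' s s' hs hs'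
    abar θbar abar' θbar' hθbar hηθbar hFOC hθbar' hηθbar' hFOC' pf pf' hpf hpf'
end

section
/- Assume v₀ ≤ 0, u₀ < 0 and (1 − v₀)² + u₀ > (E_μ[θ] − v₀)², and let (ã*, p̃*) be the valuable optimal veto mechanism of the characterization (pooling at ā below the threshold θ̄ with no veto, and proposing η(θ) with veto probability (η(θ) − ā)/(η(θ) − v₀) above θ̄, where ā solves ∫_{θ̄}¹ (η(θ) − ā) dμ(θ) + ā − E_μ[θ] = 0 and η(θ̄) = ā). Then its principal payoff ∫₀¹ (p̃*(θ)·u₀ − (1 − p̃*(θ))·(ã*(θ) − θ)²) dμ(θ) is strictly greater than −∫₀¹ (E_μ[θ] − θ)² dμ(θ), the principal payoff of the constant mechanism that chooses E_μ[θ] at every state without veto; that is, the optimal veto mechanism is valuable. -/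
/-!
Above the threshold the veto probability is tuned so that the principal's expected loss is
`(θ - ā)² - (η(θ) - ā)²`: the mechanism does as well as pooling at `ā`, plus a gain
`(η(θ) - ā)²` on `[θ̄, 1]`. Since `∫ (θ - ā)² = ∫ (E_μ[θ] - θ)² + (E_μ[θ] - ā)²` and the
first-order condition reads `E_μ[θ] - ā = ∫_{[θ̄,1]} (η - ā)`, valuability reduces to
`(∫_{[θ̄,1]} (η - ā))² < ∫_{[θ̄,1]} (η - ā)²`. This is Cauchy–Schwarz on a set of mass at most
one, strict because `η` is strictly increasing, `μ` has full support and `θ̄ < 1` (at `θ̄ = 1`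
the first-order condition would contradict the valuability condition).
-/

open MeasureTheory Set

/-- Principal's ex ante payoff from a veto mechanism `(p, a)`:
`∫ (p θ · u₀ − (1 − p θ) · (a θ − θ)²) dμ(θ)`. -/
noncomputable def vetoPayoff (μ : Measure ℝ) (u₀ : ℝ) (p a : ℝ → ℝ) : ℝ :=
  ∫ θ, (p θ * u₀ - (1 - p θ) * (a θ - θ) ^ 2) ∂μ

/-- A veto mechanism: a measurable veto probability `p : [0,1] → [0,1]` and a measurable
proposed action `a : [0,1] → [−M, M]`. -/
def IsVetoMechanism (M : ℝ) (p a : ℝ → ℝ) : Prop :=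
  Measurable p ∧ Measurable a ∧
    (∀ θ ∈ Set.Icc (0 : ℝ) 1, p θ ∈ Set.Icc (0 : ℝ) 1) ∧
    (∀ θ ∈ Set.Icc (0 : ℝ) 1, a θ ∈ Set.Icc (-M) M)

/-- Incentive compatibility of a veto mechanism: the agent's expected payoff
`p θ · v₀ + (1 − p θ) · a θ` is constant in the state. -/
def IsICVeto (v₀ : ℝ) (p a : ℝ → ℝ) : Prop :=
  ∃ vhat : ℝ, ∀ θ ∈ Set.Icc (0 : ℝ) 1, p θ * v₀ + (1 - p θ) * a θ = vhat

/-- An optimal veto mechanism: incentive compatible and weakly dominating every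
incentive-compatible veto mechanism in principal payoff. -/
def IsOptimalVeto (μ : Measure ℝ) (v₀ u₀ M : ℝ) (p a : ℝ → ℝ) : Prop :=
  IsVetoMechanism M p a ∧ IsICVeto v₀ p a ∧
    ∀ q b : ℝ → ℝ, IsVetoMechanism M q b → IsICVeto v₀ q b →
      vetoPayoff μ u₀ q b ≤ vetoPayoff μ u₀ p a

noncomputable def vetoProposal (v₀ u₀ θ : ℝ) : ℝ := √((θ - v₀) ^ 2 + u₀) + v₀

section VetoProposal

variable {v₀ u₀ : ℝ}

lemma continuous_vetoProposal : Continuous (vetoProposal v₀ u₀) := by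
  unfold vetoProposal
  fun_prop

lemma le_vetoProposal (θ : ℝ) : v₀ ≤ vetoProposal v₀ u₀ θ :=
  le_add_of_nonneg_left (Real.sqrt_nonneg _)

lemma radicand_nonneg_of_le {θ : ℝ} (hθ : √(-u₀) + v₀ ≤ θ) : 0 ≤ (θ - v₀) ^ 2 + u₀ := by
  have h := pow_le_pow_left₀ (Real.sqrt_nonneg _) (le_sub_iff_add_le.2 hθ) 2
  rw [Real.sq_sqrt'] at h
  linarith [le_max_left (-u₀) 0]

lemma sq_vetoProposal_sub {θ : ℝ} (hθ : √(-u₀) + v₀ ≤ θ) :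
    (vetoProposal v₀ u₀ θ - v₀) ^ 2 = (θ - v₀) ^ 2 + u₀ := by
  rw [vetoProposal, add_sub_cancel_right, Real.sq_sqrt (radicand_nonneg_of_le hθ)]

lemma vetoProposal_strictMonoOn : StrictMonoOn (vetoProposal v₀ u₀) (Ici (√(-u₀) + v₀)) := by
  intro x hx y _ hxy
  have hx₀ : 0 ≤ x - v₀ := by linarith [Real.sqrt_nonneg (-u₀), mem_Ici.1 hx]
  have hsq : (x - v₀) ^ 2 + u₀ < (y - v₀) ^ 2 + u₀ := by nlinarith
  exact add_lt_add_left (Real.sqrt_lt_sqrt (radicand_nonneg_of_le hx) hsq) v₀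

end VetoProposal

/-- At `e = v₀` the veto probability `(e - a) / (e - v₀)` is the junk value `0`, which is
harmless only because `ha` forces `a = v₀` there. -/
lemma veto_objective_eq {u₀ v₀ θ a e : ℝ} (he : (e - v₀) ^ 2 = (θ - v₀) ^ 2 + u₀)
    (ha : e = v₀ → a = v₀) :
    (e - a) / (e - v₀) * u₀ - (1 - (e - a) / (e - v₀)) * (e - θ) ^ 2
      = (e - a) ^ 2 - (θ - a) ^ 2 := by
  rcases eq_or_ne e v₀ with rfl | hne
  · rw [ha rfl]
    simp only [sub_self, div_zero, zero_mul, sub_zero, zero_pow two_ne_zero]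
    ring
  · have hd : e - v₀ ≠ 0 := sub_ne_zero.2 hne
    rw [show u₀ = (e - v₀) ^ 2 - (θ - v₀) ^ 2 by linarith]
    field_simp
    ring

lemma optimalVeto_objective_eq {v₀ u₀ abar θbar θ : ℝ} (hθbar : √(-u₀) + v₀ ≤ θbar)
    (hηθbar : vetoProposal v₀ u₀ θbar = abar) (hθ : θ ≤ 1) :
    (if θ < θbar then 0 else (vetoProposal v₀ u₀ θ - abar) / (vetoProposal v₀ u₀ θ - v₀)) * u₀
      - (1 - if θ < θbar then 0 else
          (vetoProposal v₀ u₀ θ - abar) / (vetoProposal v₀ u₀ θ - v₀))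
        * ((if θ < θbar then abar else vetoProposal v₀ u₀ θ) - θ) ^ 2
      = (Icc θbar 1).indicator (fun t => (vetoProposal v₀ u₀ t - abar) ^ 2) θ
        - (θ - abar) ^ 2 := by
  by_cases hlt : θ < θbar
  · rw [if_pos hlt, if_pos hlt,
      indicator_of_notMem fun h : θ ∈ Icc θbar 1 => not_le.2 hlt h.1]
    ring
  rw [not_lt] at hlt
  simp only [if_neg (not_lt.2 hlt), indicator_of_mem (mem_Icc.2 ⟨hlt, hθ⟩)]
  refine veto_objective_eq (sq_vetoProposal_sub (hθbar.trans hlt)) fun hv₀ => ?_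
  -- `η θ = v₀ ≤ η θbar` and strict monotonicity force `θ = θbar`.
  obtain rfl : θ = θbar := by
    refine le_antisymm (not_lt.1 fun h => ?_) hlt
    have := vetoProposal_strictMonoOn (mem_Ici.2 hθbar) (mem_Ici.2 (hθbar.trans hlt)) h
    linarith [le_vetoProposal (v₀ := v₀) (u₀ := u₀) θbar]
  rw [← hηθbar, hv₀]

section Moments

variable {Ω : Type*} [MeasurableSpace Ω]

lemma integral_sub_sq_eq_add_sq {μ : Measure Ω} [IsProbabilityMeasure μ] {X : Ω → ℝ} {m : ℝ}
    (hX : Integrable X μ) (hm : ∫ ω, X ω ∂μ = m) (hX₂ : Integrable (fun ω => (m - X ω) ^ 2) μ)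
    (c : ℝ) : ∫ ω, (X ω - c) ^ 2 ∂μ = ∫ ω, (m - X ω) ^ 2 ∂μ + (m - c) ^ 2 := by
  have hlin : Integrable (fun ω => 2 * (m - c) * X ω + (c ^ 2 - m ^ 2)) μ :=
    (hX.const_mul _).add (integrable_const _)
  calc ∫ ω, (X ω - c) ^ 2 ∂μ
      = ∫ ω, ((m - X ω) ^ 2 + (2 * (m - c) * X ω + (c ^ 2 - m ^ 2))) ∂μ := by
        congr 1
        ext ω
        ring
    _ = ∫ ω, (m - X ω) ^ 2 ∂μ + (m - c) ^ 2 := by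
        rw [integral_add hX₂ hlin, integral_add (hX.const_mul _) (integrable_const _),
          integral_const_mul, hm, integral_const, probReal_univ, one_smul]
        ring

lemma sq_integral_lt_measureReal_univ_mul {ν : Measure Ω} [IsFiniteMeasure ν] {f : Ω → ℝ}
    (hf : Integrable f ν) (hf₂ : Integrable (fun x => f x ^ 2) ν)
    (hpos : ∀ c, 0 < ∫ x, (f x - c) ^ 2 ∂ν) :
    (∫ x, f x ∂ν) ^ 2 < ν.real univ * ∫ x, f x ^ 2 ∂ν := by
  have hexpand (c : ℝ) : ∫ x, (f x - c) ^ 2 ∂ν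
      = ∫ x, f x ^ 2 ∂ν - 2 * c * ∫ x, f x ∂ν + c ^ 2 * ν.real univ := by
    have hlin : Integrable (fun x => -(2 * c) * f x + c ^ 2) ν :=
      (hf.const_mul _).add (integrable_const _)
    calc ∫ x, (f x - c) ^ 2 ∂ν = ∫ x, (f x ^ 2 + (-(2 * c) * f x + c ^ 2)) ∂ν := by
          congr 1
          ext x
          ring
      _ = _ := by
          rw [integral_add hf₂ hlin, integral_add (hf.const_mul _) (integrable_const _),
            integral_const_mul, integral_const, smul_eq_mul]
          ring
  have : NeZero ν := ⟨by rintro rfl; simpa using hpos 0⟩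
  have hr : 0 < ν.real univ := measureReal_univ_pos
  -- the minimum over `c` is attained at the mean `c = (∫ f) / ν(Ω)`
  have h := hpos ((∫ x, f x ∂ν) / ν.real univ)
  rw [hexpand] at h
  field_simp at h
  nlinarith

end Moments

lemma Continuous.integrable_of_ae_mem_Icc {μ : Measure ℝ} [IsLocallyFiniteMeasure μ]
    {f : ℝ → ℝ} (hf : Continuous f) {a b : ℝ} (h : ∀ᵐ x ∂μ, x ∈ Icc a b) : Integrable f μ := by
  rw [← Measure.restrict_eq_self_of_ae_mem h]
  exact hf.integrableOn_Icc

lemma exists_Ioo_forall_ne_of_strictMonoOn {g : ℝ → ℝ} {a b : ℝ} (hab : a < b)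
    (hg : StrictMonoOn g (Icc a b)) (c : ℝ) :
    ∃ x y, a ≤ x ∧ x < y ∧ y ≤ b ∧ ∀ t ∈ Ioo x y, g t ≠ c := by
  have hm : (a + b) / 2 ∈ Icc a b := ⟨by linarith, by linarith⟩
  rcases le_or_gt c (g ((a + b) / 2)) with hc | hc
  · refine ⟨(a + b) / 2, b, hm.1, by linarith, le_rfl, fun t ht => ?_⟩
    exact (hc.trans_lt (hg hm ⟨hm.1.trans ht.1.le, ht.2.le⟩ ht.1)).ne'
  · refine ⟨a, (a + b) / 2, le_rfl, by linarith, hm.2, fun t ht => ?_⟩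
    exact ((hg ⟨ht.1.le, ht.2.le.trans hm.2⟩ hm ht.2).trans hc).ne

lemma setIntegral_sq_sub_pos_of_strictMonoOn {μ : Measure ℝ} {g : ℝ → ℝ} {a b c : ℝ}
    (hab : a < b) (hμ : ∀ x y, a ≤ x → x < y → y ≤ b → 0 < μ (Ioo x y))
    (hg : StrictMonoOn g (Icc a b)) (hgi : IntegrableOn (fun t => (g t - c) ^ 2) (Icc a b) μ) :
    0 < ∫ t in Icc a b, (g t - c) ^ 2 ∂μ := by
  obtain ⟨x, y, hax, hxy, hyb, hne⟩ := exists_Ioo_forall_ne_of_strictMonoOn hab hg c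
  rw [setIntegral_pos_iff_support_of_nonneg_ae (ae_of_all _ fun _ => sq_nonneg _) hgi]
  refine (hμ x y hax hxy hyb).trans_le (measure_mono fun t ht => ⟨?_, ?_⟩)
  · exact pow_ne_zero 2 (sub_ne_zero.2 (hne t ht))
  · exact ⟨hax.trans ht.1.le, ht.2.le.trans hyb⟩

lemma sq_setIntegral_vetoProposal_sub_lt {μ : Measure ℝ} [IsFiniteMeasure μ]
    {v₀ u₀ abar θbar : ℝ} (hθbar : √(-u₀) + v₀ ≤ θbar) (hθbar₁ : θbar < 1)
    (hμ : ∀ x y, θbar ≤ x → x < y → y ≤ 1 → 0 < μ (Ioo x y)) :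
    (∫ θ in Icc θbar 1, (vetoProposal v₀ u₀ θ - abar) ∂μ) ^ 2
      < μ.real (Icc θbar 1) * ∫ θ in Icc θbar 1, (vetoProposal v₀ u₀ θ - abar) ^ 2 ∂μ := by
  have hη : Continuous (vetoProposal v₀ u₀) := continuous_vetoProposal
  rw [← measureReal_restrict_apply_univ]
  refine sq_integral_lt_measureReal_univ_mul (Continuous.integrableOn_Icc (by fun_prop))
    (Continuous.integrableOn_Icc (by fun_prop)) fun c => ?_
  simp_rw [sub_sub]
  exact setIntegral_sq_sub_pos_of_strictMonoOn hθbar₁ hμ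
    (vetoProposal_strictMonoOn.mono fun θ hθ => hθbar.trans hθ.1)
    (Continuous.integrableOn_Icc (by fun_prop))

lemma vetoThreshold_lt_one {μ : Measure ℝ} {v₀ u₀ Eμ abar θbar : ℝ}
    (hval : (Eμ - v₀) ^ 2 < (1 - v₀) ^ 2 + u₀) (hθbar : θbar ≤ 1)
    (hηθbar : vetoProposal v₀ u₀ θbar = abar)
    (hFOC : (∫ θ in Icc θbar 1, (vetoProposal v₀ u₀ θ - abar) ∂μ) + abar - Eμ = 0) :
    θbar < 1 := by
  refine hθbar.lt_of_ne fun h₁ => ?_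
  subst h₁
  have hzero : ∫ θ in Icc (1 : ℝ) 1, (vetoProposal v₀ u₀ θ - abar) ∂μ = 0 :=
    setIntegral_eq_zero_of_forall_eq_zero fun θ hθ => by
      rw [Icc_self, mem_singleton_iff] at hθ
      rw [hθ, hηθbar, sub_self]
  have hsq : (abar - v₀) ^ 2 = (1 - v₀) ^ 2 + u₀ := by
    rw [← hηθbar, vetoProposal, add_sub_cancel_right,
      Real.sq_sqrt ((sq_nonneg _).trans hval.le)]
  have hE : Eμ = abar := by linarith
  rw [hE] at hval
  linarith

theorem optimal_veto_is_valuable_general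
    (μ : Measure ℝ) [IsProbabilityMeasure μ]
    (hsupp : μ (Icc (0 : ℝ) 1) = 1)
    (hfull : ∀ a b : ℝ, 0 ≤ a → a < b → b ≤ 1 → 0 < μ (Ioo a b))
    (v₀ u₀ : ℝ)
    (Eμ : ℝ) (hEμ : Eμ = ∫ θ, θ ∂μ)
    (hval : (Eμ - v₀) ^ 2 < (1 - v₀) ^ 2 + u₀)
    (η : ℝ → ℝ) (hη : ∀ θ, η θ = Real.sqrt ((θ - v₀) ^ 2 + u₀) + v₀)
    (s : ℝ) (hs : s = max 0 (Real.sqrt (-u₀) + v₀))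
    (abar θbar : ℝ) (hθbar : θbar ∈ Icc s 1) (hηθbar : η θbar = abar)
    (hFOC : (∫ θ in Icc θbar 1, (η θ - abar) ∂μ) + abar - Eμ = 0)
    (af pf : ℝ → ℝ)
    (haf : ∀ θ, af θ = if θ < θbar then abar else η θ)
    (hpf : ∀ θ, pf θ = if θ < θbar then 0 else (η θ - abar) / (η θ - v₀)) :
    -∫ θ, (Eμ - θ) ^ 2 ∂μ < vetoPayoff μ u₀ pf af := by
  obtain rfl : η = vetoProposal v₀ u₀ := funext hη
  subst hs
  have hθbar₀ : 0 ≤ θbar := (le_max_left _ _).trans hθbar.1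
  have hθbar_sqrt : √(-u₀) + v₀ ≤ θbar := (le_max_right _ _).trans hθbar.1
  have hθbar₁ : θbar < 1 := vetoThreshold_lt_one hval hθbar.2 hηθbar hFOC
  have hae : ∀ᵐ θ ∂μ, θ ∈ Icc (0 : ℝ) 1 :=
    mem_ae_iff.2 ((prob_compl_eq_zero_iff measurableSet_Icc).2 hsupp)
  have hint {f : ℝ → ℝ} (hf : Continuous f) : Integrable f μ := hf.integrable_of_ae_mem_Icc hae
  have hη : Continuous (vetoProposal v₀ u₀) := continuous_vetoProposal
  set J := ∫ θ in Icc θbar 1, (vetoProposal v₀ u₀ θ - abar) ^ 2 ∂μ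
  have hpayoff : vetoPayoff μ u₀ pf af = J - ∫ θ, (θ - abar) ^ 2 ∂μ := by
    have hpoint : ∀ᵐ θ ∂μ, pf θ * u₀ - (1 - pf θ) * (af θ - θ) ^ 2
        = (Icc θbar 1).indicator (fun t => (vetoProposal v₀ u₀ t - abar) ^ 2) θ
          - (θ - abar) ^ 2 := hae.mono fun θ hθ => by
      rw [haf, hpf]
      exact optimalVeto_objective_eq hθbar_sqrt hηθbar hθ.2
    rw [vetoPayoff, integral_congr_ae hpoint,
      integral_sub ((hint (by fun_prop)).indicator measurableSet_Icc) (hint (by fun_prop)),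
      integral_indicator measurableSet_Icc]
  have hdecomp := integral_sub_sq_eq_add_sq (X := fun θ => θ) (hint continuous_id) hEμ.symm
    (hint (by fun_prop)) abar
  have hCS : (Eμ - abar) ^ 2 < μ.real (Icc θbar 1) * J := by
    have hI : ∫ θ in Icc θbar 1, (vetoProposal v₀ u₀ θ - abar) ∂μ = Eμ - abar := by linarith
    exact hI ▸ sq_setIntegral_vetoProposal_sub_lt hθbar_sqrt hθbar₁
      fun x y hx hxy hy => hfull x y (hθbar₀.trans hx) hxy hy
  have hJ : 0 ≤ J := setIntegral_nonneg measurableSet_Icc fun _ _ => sq_nonneg _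
  have hr : μ.real (Icc θbar 1) ≤ 1 := measureReal_le_one
  rw [hpayoff, hdecomp]
  nlinarith

/-- **The optimal veto mechanism is valuable.** Under the valuable condition with `v₀ ≤ 0`
and `u₀ < 0`, the principal payoff of the optimal veto mechanism (pooling at `ā` with no
veto below `θ̄`, and proposing `η(θ)` with veto probability `(η(θ) − ā)/(η(θ) − v₀)` above
`θ̄`) is strictly greater than `−∫₀¹ (E_μ[θ] − θ)² dμ`, the payoff from constantly choosing
`E_μ[θ]` with no veto. -/
theorem optimal_veto_is_valuable
    (μ : Measure ℝ) [IsProbabilityMeasure μ]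
    (hsupp : μ (Icc (0 : ℝ) 1) = 1)
    (hfull : ∀ a b : ℝ, 0 ≤ a → a < b → b ≤ 1 → 0 < μ (Ioo a b))
    (v₀ u₀ : ℝ) (hv₀ : v₀ ≤ 0) (hu₀ : u₀ < 0)
    (Eμ : ℝ) (hEμ : Eμ = ∫ θ, θ ∂μ)
    (hval : (Eμ - v₀) ^ 2 < (1 - v₀) ^ 2 + u₀)
    (η : ℝ → ℝ) (hη : ∀ θ, η θ = Real.sqrt ((θ - v₀) ^ 2 + u₀) + v₀)
    (s : ℝ) (hs : s = max 0 (Real.sqrt (-u₀) + v₀))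
    (abar θbar : ℝ) (hθbar : θbar ∈ Icc s 1) (hηθbar : η θbar = abar)
    (hFOC : (∫ θ in Icc θbar 1, (η θ - abar) ∂μ) + abar - Eμ = 0)
    (af pf : ℝ → ℝ)
    (haf : ∀ θ, af θ = if θ < θbar then abar else η θ)
    (hpf : ∀ θ, pf θ = if θ < θbar then 0 else (η θ - abar) / (η θ - v₀)) :
    -∫ θ, (Eμ - θ) ^ 2 ∂μ < vetoPayoff μ u₀ pf af :=
  optimal_veto_is_valuable_general μ hsupp hfull v₀ u₀ Eμ hEμ hval η hη s hs abar θbar hθbar hηθbar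
    hFOC af pf haf hpf
end
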